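/- arXiv:1406.4181 — 2 statements merged into one kernel-verified Lean document; each statement's English description precedes it below -/
import Mathlib

section
/- Let $(M,\mu)$ be a measure space, $\mathcal{S}\subset M$ of finite measure, and let $d_1, d_2$ be two topologically equivalent metrics on a space $X$ (they induce the same topology). If a family of measurable partial maps $\{(\phi_t,B_t)\}_{t\in(0,1)}$ into $X$ converges to $(\phi_0, B_0)$ with respect to $\mathcal{D}^{d_1}_\mathcal{S}$ as $t\to 0$, then it converges to $(\phi_0, B_0)$ with respect to $\mathcal{D}^{d_2}_\mathcal{S}$ as $t\to 0$. -/
/-!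
Convergence in `𝒟^{d₁}_𝒮` forces both the symmetric-difference term and the truncated
`d₁`-integral to vanish. The latter is convergence in `L¹(𝒮)`, hence in measure, so every
sequence `tₙ → 0` has a subsequence along which `min 1 (d₁ (φ_t x) (φ₀ x)) → 0` for a.e. `x`.
Topological equivalence at the single point `φ₀ x` turns this into the same statement for `d₂`,
and dominated convergence (by `1`, on the finite-measure set `𝒮`) makes the truncated
`d₂`-integral vanish. The metrics need not be uniformly equivalent, which is why the argument
passes through almost everywhere convergence.
-/

open MeasureTheory Set Filter

/-- The penalty-function distance built from an abstract distance function `d` on `X`,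
restricted to `𝒮`. -/
noncomputable def DresGen {M X : Type*} [MeasurableSpace M] (μ : Measure M)
    (d : X → X → ℝ) (S Bφ Bψ : Set M) (φ ψ : M → X) : ℝ :=
  (∫ x in Bφ ∩ Bψ ∩ S, min 1 (d (φ x) (ψ x)) ∂μ) +
    (μ (((Bφ \ Bψ) ∪ (Bψ \ Bφ)) ∩ S)).toReal

open Topology

section

variable {α ι E : Type*} [MeasurableSpace α] {μ : Measure α} {l : Filter ι}

lemma tendsto_nhds_zero_of_add_of_nonneg {f g : ι → ℝ} (hf : ∀ᶠ i in l, 0 ≤ f i)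
    (hg : ∀ᶠ i in l, 0 ≤ g i) (h : Tendsto (fun i => f i + g i) l (𝓝 0)) :
    Tendsto f l (𝓝 0) ∧ Tendsto g l (𝓝 0) :=
  ⟨tendsto_of_tendsto_of_tendsto_of_le_of_le' tendsto_const_nhds h hf
      (hg.mono fun _ => le_add_of_nonneg_right),
    tendsto_of_tendsto_of_tendsto_of_le_of_le' tendsto_const_nhds h hg
      (hf.mono fun _ => le_add_of_nonneg_left)⟩

lemma tendstoInMeasure_of_tendsto_integral_norm [NormedAddCommGroup E] {f : ι → α → E}
    (hf : ∀ᶠ i in l, Integrable (f i) μ) (h : Tendsto (fun i => ∫ x, ‖f i x‖ ∂μ) l (𝓝 0)) :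
    TendstoInMeasure μ f l 0 := by
  refine tendstoInMeasure_of_ne_top fun ε hε hε_top => ?_
  have hbound : Tendsto (fun i => ENNReal.ofReal (∫ x, ‖f i x‖ ∂μ) / ε) l (𝓝 0) := by
    simpa using ENNReal.Tendsto.div_const (ENNReal.tendsto_ofReal h) (Or.inr hε.ne')
  refine tendsto_of_tendsto_of_tendsto_of_le_of_le' tendsto_const_nhds hbound
    (Eventually.of_forall fun _ => zero_le) (hf.mono fun i hi => ?_)
  rw [ofReal_integral_norm_eq_lintegral_enorm hi]
  simpa [edist_zero_right] using
    meas_ge_le_lintegral_div hi.aestronglyMeasurable.enorm hε.ne' hε_top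

lemma tendsto_integral_of_tendstoInMeasure_of_control [l.IsCountablyGenerated]
    [NormedAddCommGroup E] {G : Type*} [NormedAddCommGroup G] [NormedSpace ℝ G]
    {F : ι → α → E} {H : ι → α → G} {bound : α → ℝ} (hF : TendstoInMeasure μ F l 0)
    (hcontrol : ∀ᵐ x ∂μ, ∀ ε > 0, ∃ δ > 0, ∀ i, ‖F i x‖ < δ → ‖H i x‖ < ε)
    (hH_meas : ∀ᶠ i in l, AEStronglyMeasurable (H i) μ)
    (hH_le : ∀ᶠ i in l, ∀ᵐ x ∂μ, ‖H i x‖ ≤ bound x) (hbound : Integrable bound μ) :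
    Tendsto (fun i => ∫ x, H i x ∂μ) l (𝓝 0) := by
  refine tendsto_of_subseq_tendsto fun u hu => ?_
  obtain ⟨ns, hns_mono, hns_ae⟩ := (hF.comp hu).exists_seq_tendsto_ae
  have hw : Tendsto (u ∘ ns) atTop l := hu.comp hns_mono.tendsto_atTop
  refine ⟨ns, ?_⟩
  have hlim : ∀ᵐ x ∂μ, Tendsto (fun n => H (u (ns n)) x) atTop (𝓝 0) := by
    filter_upwards [hns_ae, hcontrol] with x hFx hx
    refine Metric.tendsto_nhds.2 fun ε hε => ?_
    obtain ⟨δ, hδ, hδε⟩ := hx ε hε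
    filter_upwards [Metric.tendsto_nhds.1 hFx δ hδ] with n hn
    simpa using hδε _ (by simpa using hn)
  simpa using tendsto_integral_filter_of_dominated_convergence bound
    (hw.eventually hH_meas) (hw.eventually hH_le) hbound hlim

end

section

variable {M X : Type*} {d d1 d2 : X → X → ℝ}

noncomputable def truncDistOn (d : X → X → ℝ) (E : Set M) (φ ψ : M → X) : M → ℝ :=
  E.indicator fun x => min 1 (d (φ x) (ψ x))

variable {E : Set M} {φ ψ : M → X}

lemma truncDistOn_nonneg (hd : ∀ x y, 0 ≤ d x y) (x : M) : 0 ≤ truncDistOn d E φ ψ x :=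
  indicator_nonneg (fun _ _ => le_min zero_le_one (hd _ _)) x

lemma norm_truncDistOn_le_one (hd : ∀ x y, 0 ≤ d x y) (x : M) :
    ‖truncDistOn d E φ ψ x‖ ≤ 1 := by
  rw [Real.norm_of_nonneg (truncDistOn_nonneg hd x)]
  exact indicator_apply_le' (fun _ => min_le_left _ _) (fun _ => zero_le_one)

lemma measurable_truncDistOn [MeasurableSpace M] (hE : MeasurableSet E)
    (hm : Measurable fun x => d (φ x) (ψ x)) :
    Measurable (truncDistOn d E φ ψ) :=
  (measurable_const.min hm).indicator hE

lemma integrable_truncDistOn [MeasurableSpace M] {μ : Measure M} [IsFiniteMeasure μ]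
    (hd : ∀ x y, 0 ≤ d x y) (hE : MeasurableSet E) (hm : Measurable fun x => d (φ x) (ψ x)) :
    Integrable (truncDistOn d E φ ψ) μ :=
  .of_bound (measurable_truncDistOn hE hm).aestronglyMeasurable 1
    (ae_of_all _ (norm_truncDistOn_le_one hd))

lemma DresGen_eq_integral_truncDistOn [MeasurableSpace M] (μ : Measure M) (S : Set M)
    {Bφ Bψ : Set M} (hBφ : MeasurableSet Bφ) (hBψ : MeasurableSet Bψ) :
    DresGen μ d S Bφ Bψ φ ψ = ∫ x, truncDistOn d (Bφ ∩ Bψ) φ ψ x ∂μ.restrict S +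
      (μ (((Bφ \ Bψ) ∪ (Bψ \ Bφ)) ∩ S)).toReal := by
  rw [truncDistOn, integral_indicator (hBφ.inter hBψ), Measure.restrict_restrict (hBφ.inter hBψ),
    DresGen]

lemma exists_min_one_lt_of_lt
    (hequiv : ∀ y : X, ∀ ε > (0 : ℝ), ∃ δ > (0 : ℝ), ∀ z, d1 y z < δ → d2 y z < ε)
    (y : X) {ε : ℝ} (hε : 0 < ε) :
    ∃ δ > (0 : ℝ), ∀ z, min 1 (d1 y z) < δ → min 1 (d2 y z) < ε := by
  obtain ⟨δ, hδ, hδε⟩ := hequiv y ε hε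
  refine ⟨min δ 1, lt_min hδ one_pos, fun z hz => ?_⟩
  have hlt_one : d1 y z < 1 := by
    by_contra! h
    exact (min_le_right δ 1).not_gt (by rwa [min_eq_left h] at hz)
  rw [min_eq_right hlt_one.le] at hz
  exact (min_le_right _ _).trans_lt (hδε z (hz.trans_le (min_le_left _ _)))

lemma exists_norm_truncDistOn_lt (h1symm : ∀ x y, d1 x y = d1 y x)
    (h2symm : ∀ x y, d2 x y = d2 y x) (h2nonneg : ∀ x y, 0 ≤ d2 x y)
    (hequiv : ∀ y : X, ∀ ε > (0 : ℝ), ∃ δ > (0 : ℝ), ∀ z, d1 y z < δ → d2 y z < ε)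
    (ψ : M → X) (x : M) {ε : ℝ} (hε : 0 < ε) :
    ∃ δ > (0 : ℝ), ∀ (E : Set M) (φ : M → X),
      ‖truncDistOn d1 E φ ψ x‖ < δ → ‖truncDistOn d2 E φ ψ x‖ < ε := by
  obtain ⟨δ, hδ, hδε⟩ := exists_min_one_lt_of_lt hequiv (ψ x) hε
  refine ⟨δ, hδ, fun E φ h => ?_⟩
  by_cases hx : x ∈ E
  · rw [Real.norm_of_nonneg (truncDistOn_nonneg h2nonneg x)]
    simp only [truncDistOn, indicator_of_mem hx, h2symm (φ x)] at h ⊢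
    exact hδε _ (by simpa [h1symm (φ x)] using (le_abs_self _).trans_lt h)
  · simpa [truncDistOn, hx] using hε

end

theorem converges_of_equiv_metric_general {M X : Type*} [MeasurableSpace M] (μ : Measure M)
    {S : Set M} (hSfin : μ S < ⊤)
    (d1 d2 : X → X → ℝ)
    (h1nonneg : ∀ x y, 0 ≤ d1 x y)
    (h1symm : ∀ x y, d1 x y = d1 y x)
    (h2nonneg : ∀ x y, 0 ≤ d2 x y)
    (h2symm : ∀ x y, d2 x y = d2 y x)
    (hequiv12 : ∀ y : X, ∀ ε > (0 : ℝ), ∃ δ > (0 : ℝ), ∀ z, d1 y z < δ → d2 y z < ε)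
    (B : ℝ → Set M) (φ : ℝ → M → X)
    (hB : ∀ t ∈ Set.Ioo (0 : ℝ) 1, MeasurableSet (B t))
    (B0 : Set M) (φ0 : M → X) (hB0 : MeasurableSet B0)
    (hm1 : ∀ t ∈ Set.Ioo (0 : ℝ) 1, Measurable fun x => d1 (φ t x) (φ0 x))
    (hm2 : ∀ t ∈ Set.Ioo (0 : ℝ) 1, Measurable fun x => d2 (φ t x) (φ0 x))
    (hconv : Tendsto (fun t => DresGen μ d1 S (B t) B0 (φ t) φ0)
      (nhdsWithin 0 (Set.Ioo 0 1)) (nhds 0)) :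
    Tendsto (fun t => DresGen μ d2 S (B t) B0 (φ t) φ0)
      (nhdsWithin 0 (Set.Ioo 0 1)) (nhds 0) := by
  have hI : ∀ᶠ t in 𝓝[Ioo 0 1] (0 : ℝ), t ∈ Ioo (0 : ℝ) 1 := self_mem_nhdsWithin
  have : IsFiniteMeasure (μ.restrict S) := isFiniteMeasure_restrict.2 hSfin.ne
  set F := fun t => truncDistOn d1 (B t ∩ B0) (φ t) φ0
  obtain ⟨hF, hJ⟩ := tendsto_nhds_zero_of_add_of_nonneg
    (.of_forall fun t => integral_nonneg (truncDistOn_nonneg h1nonneg))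
    (.of_forall fun t => ENNReal.toReal_nonneg)
    (hconv.congr' (hI.mono fun t ht => DresGen_eq_integral_truncDistOn μ S (hB t ht) hB0))
  have hF_meas : TendstoInMeasure (μ.restrict S) F (𝓝[Ioo 0 1] 0) 0 :=
    tendstoInMeasure_of_tendsto_integral_norm
      (hI.mono fun t ht => integrable_truncDistOn h1nonneg ((hB t ht).inter hB0) (hm1 t ht))
      (by simpa only [F, Real.norm_of_nonneg (truncDistOn_nonneg h1nonneg _)] using hF)
  have hG := tendsto_integral_of_tendstoInMeasure_of_control hF_meas
    (ae_of_all _ fun x ε hε => exists_norm_truncDistOn_lt h1symm h2symm h2nonneg hequiv12 φ0 x hε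
      |>.imp fun δ hδ => ⟨hδ.1, fun t => hδ.2 _ _⟩)
    (hI.mono fun t ht =>
      (measurable_truncDistOn ((hB t ht).inter hB0) (hm2 t ht)).aestronglyMeasurable)
    (.of_forall fun t => ae_of_all _ (norm_truncDistOn_le_one h2nonneg)) (integrable_const 1)
  simpa using (hG.add hJ).congr'
    (hI.mono fun t ht => (DresGen_eq_integral_truncDistOn μ S (hB t ht) hB0).symm)

/-- If `d₁` and `d₂` are topologically equivalent metrics on `X`, then convergence of a
family of partial maps with respect to `𝒟^{d₁}_𝒮` implies convergence with respect to
`𝒟^{d₂}_𝒮`. -/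
theorem converges_of_equiv_metric {M X : Type*} [MeasurableSpace M] (μ : Measure M)
    {S : Set M} (hS : MeasurableSet S) (hSfin : μ S < ⊤)
    (d1 d2 : X → X → ℝ)
    (h1nonneg : ∀ x y, 0 ≤ d1 x y) (h1self : ∀ x, d1 x x = 0)
    (h1symm : ∀ x y, d1 x y = d1 y x) (h1tri : ∀ x y z, d1 x z ≤ d1 x y + d1 y z)
    (h1pos : ∀ x y, d1 x y = 0 → x = y)
    (h2nonneg : ∀ x y, 0 ≤ d2 x y) (h2self : ∀ x, d2 x x = 0)
    (h2symm : ∀ x y, d2 x y = d2 y x) (h2tri : ∀ x y z, d2 x z ≤ d2 x y + d2 y z)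
    (h2pos : ∀ x y, d2 x y = 0 → x = y)
    (hequiv12 : ∀ y : X, ∀ ε > (0 : ℝ), ∃ δ > (0 : ℝ), ∀ z, d1 y z < δ → d2 y z < ε)
    (hequiv21 : ∀ y : X, ∀ ε > (0 : ℝ), ∃ δ > (0 : ℝ), ∀ z, d2 y z < δ → d1 y z < ε)
    (B : ℝ → Set M) (φ : ℝ → M → X)
    (hB : ∀ t ∈ Set.Ioo (0 : ℝ) 1, MeasurableSet (B t))
    (B0 : Set M) (φ0 : M → X) (hB0 : MeasurableSet B0)
    (hm1 : ∀ t ∈ Set.Ioo (0 : ℝ) 1, Measurable fun x => d1 (φ t x) (φ0 x))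
    (hm2 : ∀ t ∈ Set.Ioo (0 : ℝ) 1, Measurable fun x => d2 (φ t x) (φ0 x))
    (hconv : Tendsto (fun t => DresGen μ d1 S (B t) B0 (φ t) φ0)
      (nhdsWithin 0 (Set.Ioo 0 1)) (nhds 0)) :
    Tendsto (fun t => DresGen μ d2 S (B t) B0 (φ t) φ0)
      (nhdsWithin 0 (Set.Ioo 0 1)) (nhds 0) :=
  converges_of_equiv_metric_general μ hSfin d1 d2 h1nonneg h1symm h2nonneg h2symm hequiv12 B φ hB B0
    φ0 hB0 hm1 hm2 hconv
end

section
/- Let $(M,\mu)$ be a measure space with a nested exhaustion $\{\mathcal{S}_n\}$ by finite positive measure sets and $(X,d)$ a complete metric space. Then the space of equivalence classes of measurable partial maps from $M$ to $X$ (where $\phi \sim \psi$ iff $\mathcal{D}_{\{\mathcal{S}_n\}}(\phi,\psi)=0$), equipped with the distance $\mathcal{D}_{\{\mathcal{S}_n\}}$, is a complete metric space. Conversely, if $(X,d)$ is not complete then this space of partial maps is not complete. -/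
open MeasureTheory Set Filter
open scoped ENNReal

attribute [local instance] Classical.propDecidable

section OptX

/-- `X` together with an added point, used to encode partial maps as total maps. -/
inductive OptX (X : Type*) where
  | none : OptX X
  | some : X → OptX X

namespace OptX

variable {X : Type*} [MetricSpace X]

/-- The (bounded) distance on `OptX X`. -/
noncomputable def odist : OptX X → OptX X → ℝ
  | .none, .none => 0
  | .some a, .some b => min 1 (dist a b)
  | _, _ => 1

lemma odist_nonneg' : ∀ o₁ o₂ : OptX X, 0 ≤ odist o₁ o₂
  | .none, .none => le_rfl
  | .some _, .some _ => le_min zero_le_one dist_nonneg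
  | .none, .some _ => zero_le_one
  | .some _, .none => zero_le_one

lemma odist_le_one' : ∀ o₁ o₂ : OptX X, odist o₁ o₂ ≤ 1
  | .none, .none => zero_le_one
  | .some _, .some _ => min_le_left _ _
  | .none, .some _ => le_rfl
  | .some _, .none => le_rfl

private lemma min1_add (x y : ℝ) (hx : 0 ≤ x) (hy : 0 ≤ y) :
    min 1 (x + y) ≤ min 1 x + min 1 y := by
  rcases le_total 1 x with h | h
  · have h1 : min 1 x = 1 := min_eq_left h
    have h2 : min 1 (x + y) ≤ 1 := min_le_left _ _
    have h3 : 0 ≤ min 1 y := le_min zero_le_one hy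
    linarith
  · rcases le_total 1 y with h' | h'
    · have h1 : min 1 y = 1 := min_eq_left h'
      have h2 : min 1 (x + y) ≤ 1 := min_le_left _ _
      have h3 : 0 ≤ min 1 x := le_min zero_le_one hx
      linarith
    · rw [min_eq_right h, min_eq_right h']
      exact min_le_right _ _

private lemma min1_nonneg (a b : X) : 0 ≤ min 1 (dist a b) := le_min zero_le_one dist_nonneg

lemma odist_triangle : ∀ o₁ o₂ o₃ : OptX X, odist o₁ o₃ ≤ odist o₁ o₂ + odist o₂ o₃
  | .none, .none, .none => by simp [odist]
  | .none, .none, .some _ => by simp [odist]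
  | .none, .some _, .none => by simp [odist]
  | .none, .some b, .some c => by
      simp only [odist]; linarith [min1_nonneg b c]
  | .some _, .none, .none => by simp [odist]
  | .some a, .none, .some c => by
      simp only [odist]; linarith [min_le_left 1 (dist a c)]
  | .some a, .some b, .none => by
      simp only [odist]; linarith [min1_nonneg a b]
  | .some a, .some b, .some c => by
      simp only [odist]
      calc min 1 (dist a c) ≤ min 1 (dist a b + dist b c) :=
            min_le_min le_rfl (dist_triangle a b c)
        _ ≤ min 1 (dist a b) + min 1 (dist b c) := min1_add _ _ dist_nonneg dist_nonneg

noncomputable instance : MetricSpace (OptX X) where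
  dist := odist
  dist_self o := by cases o <;> simp [odist]
  dist_comm o₁ o₂ := by cases o₁ <;> cases o₂ <;> simp [odist, dist_comm]
  dist_triangle := odist_triangle
  eq_of_dist_eq_zero := by
    intro o₁ o₂ h
    cases o₁ <;> cases o₂ <;> simp [odist] at h ⊢
    rcases min_eq_iff.mp h with ⟨h1, _⟩ | ⟨h2, _⟩
    · exact absurd h1 one_ne_zero
    · exact dist_eq_zero.mp h2

@[simp] lemma dist_none_none : dist (OptX.none : OptX X) OptX.none = 0 := rfl
@[simp] lemma dist_some_some (a b : X) :
    dist (OptX.some a) (OptX.some b) = min 1 (dist a b) := rfl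
@[simp] lemma dist_none_some (b : X) : dist (OptX.none : OptX X) (OptX.some b) = 1 := rfl
@[simp] lemma dist_some_none (a : X) : dist (OptX.some a) (OptX.none : OptX X) = 1 := rfl

lemma dist_le_one (o₁ o₂ : OptX X) : dist o₁ o₂ ≤ 1 := odist_le_one' o₁ o₂

lemma lt_of_min1_lt {d ε : ℝ} (h : min 1 d < min ε 1) : d < ε := by
  rcases le_total 1 d with h1 | h1
  · exact absurd (lt_of_le_of_lt (le_trans (min_eq_left h1).ge (by rw [min_eq_left h1]))
      (lt_of_lt_of_le h (min_le_right _ _))) (lt_irrefl 1)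
  · have h2 : min 1 d = d := min_eq_right h1
    rw [h2] at h
    exact lt_of_lt_of_le h (min_le_left _ _)

noncomputable instance : MeasurableSpace (OptX X) := borel (OptX X)
instance : BorelSpace (OptX X) := ⟨rfl⟩

lemma lipschitz_some : LipschitzWith 1 (OptX.some : X → OptX X) :=
  LipschitzWith.of_dist_le_mul fun a b => by
    rw [dist_some_some]; simpa using min_le_right 1 (dist a b)

lemma measurable_some [MeasurableSpace X] [BorelSpace X] :
    Measurable (OptX.some : X → OptX X) :=
  lipschitz_some.continuous.measurable

/-- Extract the value of an `OptX`, with a default. -/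
def oget (d0 : X) : OptX X → X
  | .none => d0
  | .some a => a

lemma continuous_oget (d0 : X) : Continuous (oget d0 : OptX X → X) := by
  rw [Metric.continuous_iff]
  rintro (_ | b) ε hε
  · refine ⟨min ε 1, lt_min hε one_pos, ?_⟩
    rintro (_ | a) h
    · simpa [oget] using hε
    · rw [dist_some_none] at h
      exact absurd h (not_lt.mpr (min_le_right ε 1))
  · refine ⟨min ε 1, lt_min hε one_pos, ?_⟩
    rintro (_ | a) h
    · rw [dist_none_some] at h
      exact absurd h (not_lt.mpr (min_le_right ε 1))
    · rw [dist_some_some] at h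
      exact lt_of_min1_lt h

lemma measurable_oget [MeasurableSpace X] [BorelSpace X] (d0 : X) :
    Measurable (oget d0 : OptX X → X) :=
  (continuous_oget d0).measurable

instance [TopologicalSpace.SeparableSpace X] :
    TopologicalSpace.SeparableSpace (OptX X) := by
  obtain ⟨s, hsc, hsd⟩ := TopologicalSpace.exists_countable_dense X
  refine ⟨⟨insert OptX.none (OptX.some '' s), (hsc.image _).insert _, ?_⟩⟩
  rw [Metric.dense_iff]
  rintro (_ | a) r hr
  · exact ⟨OptX.none, by simpa [Metric.mem_ball] using hr, mem_insert _ _⟩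
  · obtain ⟨b, hab, hb⟩ := Metric.dense_iff.mp hsd a r hr
    refine ⟨OptX.some b, ?_, mem_insert_of_mem _ ⟨b, hb, rfl⟩⟩
    rw [Metric.mem_ball] at hab ⊢
    rw [dist_some_some]
    exact lt_of_le_of_lt (min_le_right _ _) hab

instance [TopologicalSpace.SeparableSpace X] : SecondCountableTopology (OptX X) :=
  UniformSpace.secondCountable_of_separable _

instance [CompleteSpace X] : CompleteSpace (OptX X) := by
  apply Metric.complete_of_cauchySeq_tendsto
  intro u hu
  obtain ⟨N, hN⟩ := Metric.cauchySeq_iff.mp hu (1 / 2) (by norm_num)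
  match hN0 : u N with
  | .none =>
    refine ⟨OptX.none, Tendsto.congr' ?_ tendsto_const_nhds⟩
    filter_upwards [eventually_ge_atTop N] with n hn
    have := hN n hn N le_rfl
    rw [hN0] at this
    match hn0 : u n with
    | .none => rfl
    | .some a => rw [hn0, dist_some_none] at this; norm_num at this
  | .some a₀ =>
    have hsome : ∀ n ≥ N, ∃ b, u n = OptX.some b := by
      intro n hn
      have := hN n hn N le_rfl
      rw [hN0] at this
      match hn0 : u n with
      | .none => rw [hn0, dist_none_some] at this; norm_num at this
      | .some b => exact ⟨b, rfl⟩
    set v : ℕ → X := fun n => oget a₀ (u (n + N)) with hv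
    have hval : ∀ n, u (n + N) = OptX.some (v n) := by
      intro n
      obtain ⟨b, hb⟩ := hsome (n + N) (Nat.le_add_left _ _)
      rw [hv]; simp only; rw [hb]; rfl
    have hvC : CauchySeq v := by
      rw [Metric.cauchySeq_iff]
      intro ε hε
      obtain ⟨N', hN'⟩ := Metric.cauchySeq_iff.mp hu (min ε 1) (lt_min hε one_pos)
      refine ⟨N', fun m hm n hn => ?_⟩
      have := hN' (m + N) (le_trans hm (Nat.le_add_right _ _))
        (n + N) (le_trans hn (Nat.le_add_right _ _))
      rw [hval m, hval n, dist_some_some] at this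
      exact lt_of_min1_lt this
    obtain ⟨l, hl⟩ := cauchySeq_tendsto_of_complete hvC
    refine ⟨OptX.some l, ?_⟩
    rw [Metric.tendsto_atTop]
    intro ε hε
    obtain ⟨N₂, hN₂⟩ := Metric.tendsto_atTop.mp hl ε hε
    refine ⟨N₂ + N, fun n hn => ?_⟩
    have hn' : n - N + N = n := Nat.sub_add_cancel (le_trans (Nat.le_add_left _ _) hn)
    have : u n = OptX.some (v (n - N)) := by
      have h2 := hval (n - N); rw [hn'] at h2; exact h2
    rw [this, dist_some_some]
    exact lt_of_le_of_lt (min_le_right _ _) (hN₂ _ (by omega))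

end OptX
end OptX

/-- The penalty function between two partial maps with cutoff `1`. -/
noncomputable def penalty {M X : Type*} [MetricSpace X]
    (Bφ Bψ : Set M) (φ ψ : M → X) (x : M) : ℝ :=
  if x ∈ Bφ ∩ Bψ then min 1 (dist (φ x) (ψ x))
  else if x ∈ (Bφ \ Bψ) ∪ (Bψ \ Bφ) then 1
  else 0

/-- The probability measure `ν(A) = ∑ₙ 2⁻ⁿ μ(A ∩ 𝒮ₙ)/μ(𝒮ₙ)` associated to an
exhaustion `{𝒮ₙ}` of `M`. -/
noncomputable def nuMeasure {M : Type*} [MeasurableSpace M] (μ : Measure M)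
    (S : ℕ → Set M) : Measure M :=
  Measure.sum fun n => (2 ^ (n + 1) * μ (S n))⁻¹ • μ.restrict (S n)

section Layer2

variable {M X : Type*} [MetricSpace X]

/-- Encoding of a partial map as a total map into `OptX X`. -/
noncomputable def toF (B : Set M) (φ : M → X) (x : M) : OptX X :=
  if x ∈ B then OptX.some (φ x) else OptX.none

lemma penalty_eq_dist (Bφ Bψ : Set M) (φ ψ : M → X) (x : M) :
    penalty Bφ Bψ φ ψ x = dist (toF Bφ φ x) (toF Bψ ψ x) := by
  by_cases h1 : x ∈ Bφ <;> by_cases h2 : x ∈ Bψ <;>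
    simp [penalty, toF, h1, h2]

variable [MeasurableSpace M] [MeasurableSpace X] [BorelSpace X]

lemma measurable_toF {B : Set M} {φ : M → X} (hB : MeasurableSet B) (hφ : Measurable φ) :
    Measurable (toF B φ) :=
  Measurable.ite hB (OptX.measurable_some.comp hφ) measurable_const

lemma integrable_dist_optx [TopologicalSpace.SeparableSpace X]
    {F G : M → OptX X} (hF : Measurable F) (hG : Measurable G)
    (ν : Measure M) [IsFiniteMeasure ν] :
    Integrable (fun x => dist (F x) (G x)) ν := by
  refine (integrable_const (1 : ℝ)).mono' (hF.dist hG).aestronglyMeasurable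
    (ae_of_all _ fun x => ?_)
  rw [Real.norm_eq_abs, abs_of_nonneg dist_nonneg]
  exact OptX.dist_le_one _ _

end Layer2

section Prob

variable {M : Type*} [MeasurableSpace M]

lemma nuMeasure_univ (μ : Measure M) (S : ℕ → Set M)
    (hpos : ∀ n, 0 < μ (S n)) (hfin : ∀ n, μ (S n) < ⊤) :
    nuMeasure μ S univ = 1 := by
  rw [nuMeasure, Measure.sum_apply _ MeasurableSet.univ]
  have hterm : ∀ n, ((2 ^ (n + 1) * μ (S n))⁻¹ • μ.restrict (S n)) univ
      = (2 : ℝ≥0∞)⁻¹ ^ (n + 1) := by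
    intro n
    rw [Measure.smul_apply, Measure.restrict_apply_univ, smul_eq_mul,
      ENNReal.mul_inv (Or.inl (by positivity)) (Or.inl (by simp)), mul_assoc,
      ENNReal.inv_mul_cancel (hpos n).ne' (hfin n).ne, mul_one, ← ENNReal.inv_pow]
  simp_rw [hterm]
  have h2 : ∀ n : ℕ, (2 : ℝ≥0∞)⁻¹ ^ (n + 1) = 2⁻¹ * 2⁻¹ ^ n := fun n => pow_succ' _ _
  simp_rw [h2]
  rw [ENNReal.tsum_mul_left, ENNReal.tsum_geometric, ENNReal.one_sub_inv_two,
    ENNReal.mul_inv_cancel (by norm_num) (by norm_num)]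

/-- Key a.e.-summability lemma. -/
lemma ae_summable_of_integral_le (ν : Measure M) [IsFiniteMeasure ν]
    (f : ℕ → M → ℝ) (hm : ∀ k, Measurable (f k))
    (h0 : ∀ k x, 0 ≤ f k x) (h1 : ∀ k x, f k x ≤ 1)
    (hsum : ∀ k, ∫ x, f k x ∂ν ≤ (2⁻¹ : ℝ) ^ k) :
    ∀ᵐ x ∂ν, Summable fun k => f k x := by
  have hint : ∀ k, Integrable (f k) ν := fun k =>
    (integrable_const (1 : ℝ)).mono' (hm k).aestronglyMeasurable
      (ae_of_all _ fun x => by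
        rw [Real.norm_eq_abs, abs_of_nonneg (h0 k x)]; exact h1 k x)
  have hlin : ∀ k, ∫⁻ x, ENNReal.ofReal (f k x) ∂ν ≤ ENNReal.ofReal ((2⁻¹ : ℝ) ^ k) := by
    intro k
    rw [← ofReal_integral_eq_lintegral_ofReal (hint k) (ae_of_all _ (h0 k))]
    exact ENNReal.ofReal_le_ofReal (hsum k)
  have htsum : ∑' k, ∫⁻ x, ENNReal.ofReal (f k x) ∂ν ≠ ⊤ := by
    have hle : ∑' k, ∫⁻ x, ENNReal.ofReal (f k x) ∂ν
        ≤ ∑' k, (ENNReal.ofReal (2⁻¹ : ℝ)) ^ k := by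
      refine ENNReal.tsum_le_tsum fun k => le_trans (hlin k) ?_
      rw [ENNReal.ofReal_pow (by norm_num)]
    refine ne_top_of_le_ne_top ?_ hle
    rw [ENNReal.tsum_geometric, Ne, ENNReal.inv_eq_top, tsub_eq_zero_iff_le, not_le]
    exact ENNReal.ofReal_lt_one.mpr (by norm_num)
  have hmeas2 : ∀ k, Measurable fun x => ENNReal.ofReal (f k x) := fun k =>
    (hm k).ennreal_ofReal
  have hfin : ∫⁻ x, ∑' k, ENNReal.ofReal (f k x) ∂ν ≠ ⊤ := by
    rw [lintegral_tsum fun k => (hmeas2 k).aemeasurable]; exact htsum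
  filter_upwards [ae_lt_top (Measurable.ennreal_tsum hmeas2) hfin] with x hx
  exact (ENNReal.summable_toReal hx.ne).congr fun k => ENNReal.toReal_ofReal (h0 k x)

/-- Extraction of a rapid subsequence. -/
lemma exists_rapid_seq (P : ℕ → ℕ → Prop) (hP : ∀ k, ∃ N, ∀ n ≥ N, P k n) :
    ∃ m : ℕ → ℕ, StrictMono m ∧ ∀ k n, m k ≤ n → P k n := by
  choose Nof hNof using hP
  set m : ℕ → ℕ := fun k => Nat.rec (Nof 0) (fun k ih => max (ih + 1) (Nof (k + 1))) k with hm
  have hge : ∀ k, Nof k ≤ m k := by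
    intro k; cases k with
    | zero => exact le_rfl
    | succ k => exact le_max_right _ _
  refine ⟨m, strictMono_nat_of_lt_succ fun k => ?_, fun k n hn => hNof k n (le_trans (hge k) hn)⟩
  exact lt_of_lt_of_le (Nat.lt_succ_self _) (le_max_left _ _)

end Prob

/-- The space of (equivalence classes of) measurable partial maps from `M` into `X`,
equipped with the distance `𝒟_{𝒮ₙ}`, is complete if and only if `(X, d)` is complete:
every `𝒟`-Cauchy sequence of measurable partial maps has a `𝒟`-limit iff `X` is a
complete metric space. -/
theorem partial_maps_complete_iff {M X : Type*} [MeasurableSpace M] (μ : Measure M)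
    [MetricSpace X] [MeasurableSpace X] [BorelSpace X] [SecondCountableTopology X]
    (S : ℕ → Set M) (hmeas : ∀ n, MeasurableSet (S n))
    (hmono : ∀ n, S n ⊆ S (n + 1)) (hunion : ⋃ n, S n = univ)
    (hpos : ∀ n, 0 < μ (S n)) (hfin : ∀ n, μ (S n) < ⊤) :
    CompleteSpace X ↔
      ∀ (B : ℕ → Set M) (φ : ℕ → M → X),
        (∀ n, MeasurableSet (B n)) → (∀ n, Measurable (φ n)) →
        (∀ ε > (0 : ℝ), ∃ N : ℕ, ∀ m ≥ N, ∀ n ≥ N,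
          (∫ x, penalty (B m) (B n) (φ m) (φ n) x ∂nuMeasure μ S) < ε) →
        ∃ (B0 : Set M) (φ0 : M → X), MeasurableSet B0 ∧ Measurable φ0 ∧
          Tendsto (fun n => ∫ x, penalty (B n) B0 (φ n) φ0 x ∂nuMeasure μ S)
            atTop (nhds 0) := by
  set ν := nuMeasure μ S with hνdef
  haveI : IsProbabilityMeasure ν := ⟨nuMeasure_univ μ S hpos hfin⟩
  constructor
  · -- Completeness of X implies completeness of the space of partial maps
    intro hX B φ hB hφ hC
    obtain ⟨m0, _⟩ : (S 0).Nonempty := nonempty_of_measure_ne_zero (hpos 0).ne'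
    set d0 : X := φ 0 m0 with hd0
    set F : ℕ → M → OptX X := fun n => toF (B n) (φ n) with hF
    have hFm : ∀ n, Measurable (F n) := fun n => measurable_toF (hB n) (hφ n)
    have hC' : ∀ ε > (0 : ℝ), ∃ N : ℕ, ∀ i ≥ N, ∀ j ≥ N,
        (∫ x, dist (F i x) (F j x) ∂ν) < ε := by
      intro ε hε
      obtain ⟨N, hN⟩ := hC ε hε
      refine ⟨N, fun i hi j hj => ?_⟩
      have := hN i hi j hj
      rwa [show (fun x => penalty (B i) (B j) (φ i) (φ j) x)
        = fun x => dist (F i x) (F j x) from funext fun x => penalty_eq_dist _ _ _ _ x] at this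
    obtain ⟨ns, hns_mono, hns⟩ := exists_rapid_seq
      (fun k n => ∀ i ≥ n, ∀ j ≥ n, (∫ x, dist (F i x) (F j x) ∂ν) < (2⁻¹ : ℝ) ^ k)
      (fun k => by
        obtain ⟨N, hN⟩ := hC' ((2⁻¹ : ℝ) ^ k) (by positivity)
        exact ⟨N, fun n hn i hi j hj => hN i (le_trans hn hi) j (le_trans hn hj)⟩)
    have key : ∀ k i j, ns k ≤ i → ns k ≤ j →
        (∫ x, dist (F i x) (F j x) ∂ν) < (2⁻¹ : ℝ) ^ k :=
      fun k i j hi hj => hns k (ns k) le_rfl i hi j hj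
    have hae := ae_summable_of_integral_le ν
      (fun k x => dist (F (ns (k + 1)) x) (F (ns k) x))
      (fun k => (hFm _).dist (hFm _))
      (fun k x => dist_nonneg) (fun k x => OptX.dist_le_one _ _)
      (fun k => le_of_lt (key k _ _ (hns_mono.monotone (Nat.le_succ k)) le_rfl))
    have hae2 : ∀ᵐ x ∂ν, ∃ l, Tendsto (fun k => F (ns k) x) atTop (nhds l) := by
      filter_upwards [hae] with x hx
      exact cauchySeq_tendsto_of_complete
        (cauchySeq_of_summable_dist (hx.congr fun k => dist_comm _ _))
    obtain ⟨g, htg⟩ : ∃ g : M → OptX X,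
        ∀ᵐ x ∂ν, Tendsto (fun k => F (ns k) x) atTop (nhds (g x)) := by
      refine ⟨fun x => if h : ∃ l, Tendsto (fun k => F (ns k) x) atTop (nhds l)
        then h.choose else OptX.none, ?_⟩
      filter_upwards [hae2] with x hx
      rw [dif_pos hx]; exact hx.choose_spec
    have hgm : AEMeasurable g ν :=
      aemeasurable_of_tendsto_metrizable_ae atTop (fun k => (hFm (ns k)).aemeasurable) htg
    set g' := hgm.mk g with hg'def
    have hg'm : Measurable g' := hgm.measurable_mk
    have htg' : ∀ᵐ x ∂ν, Tendsto (fun k => F (ns k) x) atTop (nhds (g' x)) := by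
      filter_upwards [htg, hgm.ae_eq_mk] with x h1 h2
      rwa [h2] at h1
    set B0 : Set M := g' ⁻¹' ({OptX.none}ᶜ) with hB0def
    have hB0 : MeasurableSet B0 := hg'm (isClosed_singleton.measurableSet.compl)
    set φ0 : M → X := fun x => OptX.oget d0 (g' x) with hφ0def
    have hφ0 : Measurable φ0 := (OptX.measurable_oget d0).comp hg'm
    have hF0 : ∀ x, toF B0 φ0 x = g' x := by
      intro x
      by_cases h : x ∈ B0
      · have hne : g' x ≠ OptX.none := by simpa [hB0def] using h
        rw [toF, if_pos h]
        match hx : g' x with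
        | .none => exact absurd hx hne
        | .some b => rw [hφ0def]; simp only; rw [hx]; rfl
      · have hno : g' x = OptX.none := by
          by_contra hne
          exact h (by simpa [hB0def] using hne)
        rw [toF, if_neg h, hno]
    refine ⟨B0, φ0, hB0, hφ0, ?_⟩
    have hrw : (fun n => ∫ x, penalty (B n) B0 (φ n) φ0 x ∂ν)
        = fun n => ∫ x, dist (F n x) (g' x) ∂ν := by
      funext n
      congr 1
      funext x
      rw [penalty_eq_dist, hF0]
    rw [hrw]
    have hsub : Tendsto (fun k => ∫ x, dist (F (ns k) x) (g' x) ∂ν) atTop (nhds 0) := by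
      have hdom := tendsto_integral_of_dominated_convergence (fun _ => (1 : ℝ))
        (fun k => ((hFm (ns k)).dist hg'm).aestronglyMeasurable)
        (integrable_const 1)
        (fun k => ae_of_all _ fun x => by
          rw [Real.norm_eq_abs, abs_of_nonneg dist_nonneg]; exact OptX.dist_le_one _ _)
        (by
          filter_upwards [htg'] with x hx
          simpa using hx.dist (tendsto_const_nhds (x := g' x)))
      simpa using hdom
    rw [Metric.tendsto_atTop]
    intro ε hε
    obtain ⟨k₁, hk₁⟩ := exists_pow_lt_of_lt_one (half_pos hε) (by norm_num : (2⁻¹ : ℝ) < 1)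
    obtain ⟨k₂, hk₂⟩ := Metric.tendsto_atTop.mp hsub (ε / 2) (half_pos hε)
    set K := max k₁ k₂ with hK
    refine ⟨ns K, fun n hn => ?_⟩
    have hint1 : Integrable (fun x => dist (F n x) (F (ns K) x)) ν :=
      integrable_dist_optx (hFm n) (hFm (ns K)) ν
    have hint2 : Integrable (fun x => dist (F (ns K) x) (g' x)) ν :=
      integrable_dist_optx (hFm (ns K)) hg'm ν
    have hint3 : Integrable (fun x => dist (F n x) (g' x)) ν :=
      integrable_dist_optx (hFm n) hg'm ν
    have h1 : (∫ x, dist (F n x) (F (ns K) x) ∂ν) < (2⁻¹ : ℝ) ^ K :=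
      key K n (ns K) hn le_rfl
    have h1' : ((2⁻¹ : ℝ)) ^ K ≤ 2⁻¹ ^ k₁ :=
      pow_le_pow_of_le_one (by norm_num) (by norm_num) (le_max_left _ _)
    have h2 : (∫ x, dist (F (ns K) x) (g' x) ∂ν) < ε / 2 := by
      have := hk₂ K (le_max_right _ _)
      rwa [Real.dist_eq, sub_zero,
        abs_of_nonneg (integral_nonneg fun x => dist_nonneg)] at this
    have h3 : (∫ x, dist (F n x) (g' x) ∂ν)
        ≤ (∫ x, dist (F n x) (F (ns K) x) ∂ν) + ∫ x, dist (F (ns K) x) (g' x) ∂ν := by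
      rw [← integral_add hint1 hint2]
      exact integral_mono hint3 (hint1.add hint2) fun x => dist_triangle _ _ _
    rw [Real.dist_eq, sub_zero, abs_of_nonneg (integral_nonneg fun x => dist_nonneg)]
    calc (∫ x, dist (F n x) (g' x) ∂ν) ≤ _ + _ := h3
      _ < 2⁻¹ ^ K + ε / 2 := by linarith
      _ ≤ 2⁻¹ ^ k₁ + ε / 2 := by linarith
      _ < ε / 2 + ε / 2 := by linarith
      _ = ε := by ring
  · -- Completeness of the space of partial maps implies completeness of X
    intro H
    apply Metric.complete_of_cauchySeq_tendsto
    intro y hy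
    have hint_const : ∀ c : ℝ, (∫ _x, c ∂ν) = c := fun c => by
      simp [integral_const, measure_univ]
    obtain ⟨B0, φ0, hB0, hφ0, htend⟩ := H (fun _ => univ) (fun n _ => y n)
      (fun _ => MeasurableSet.univ) (fun n => measurable_const)
      (by
        intro ε hε
        obtain ⟨N, hN⟩ := Metric.cauchySeq_iff.mp hy ε hε
        refine ⟨N, fun m hm n hn => ?_⟩
        have hpen : (fun x : M => penalty univ univ (fun _ => y m) (fun _ => y n) x)
            = fun _ => min 1 (dist (y m) (y n)) := by
          funext x; simp [penalty]
        rw [hpen, hint_const]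
        exact lt_of_le_of_lt (min_le_right _ _) (hN m hm n hn))
    set G : M → OptX X := toF B0 φ0 with hG
    have hGm : Measurable G := measurable_toF hB0 hφ0
    have htend' : Tendsto (fun n => ∫ x, dist (OptX.some (y n)) (G x) ∂ν)
        atTop (nhds 0) := by
      refine htend.congr fun n => ?_
      congr 1
      funext x
      rw [penalty_eq_dist]
      congr 1
      simp [toF]
    obtain ⟨ms, hms_mono, hms⟩ := exists_rapid_seq
      (fun k n => (∫ x, dist (OptX.some (y n)) (G x) ∂ν) ≤ (2⁻¹ : ℝ) ^ k)
      (by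
        intro k
        obtain ⟨N, hN⟩ := Metric.tendsto_atTop.mp htend' ((2⁻¹ : ℝ) ^ k) (by positivity)
        refine ⟨N, fun n hn => ?_⟩
        have := hN n hn
        rw [Real.dist_eq, sub_zero,
          abs_of_nonneg (integral_nonneg fun x => dist_nonneg)] at this
        exact le_of_lt this)
    have hae := ae_summable_of_integral_le ν
      (fun k x => dist (OptX.some (y (ms k))) (G x))
      (fun k => measurable_const.dist hGm)
      (fun k x => dist_nonneg) (fun k x => OptX.dist_le_one _ _)
      (fun k => hms k (ms k) le_rfl)
    haveI : (ae ν).NeBot := ae_neBot.mpr (IsProbabilityMeasure.ne_zero ν)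
    obtain ⟨x, hx⟩ := hae.exists
    have hlim0 : Tendsto (fun k => dist (OptX.some (y (ms k))) (G x)) atTop (nhds 0) :=
      hx.tendsto_atTop_zero
    obtain ⟨b, hb⟩ : ∃ b, G x = OptX.some b := by
      match hGx : G x with
      | .some b => exact ⟨b, rfl⟩
      | .none =>
        simp only [hGx, OptX.dist_some_none] at hlim0
        have := tendsto_nhds_unique hlim0 tendsto_const_nhds
        norm_num at this
    have hyb : Tendsto (fun k => y (ms k)) atTop (nhds b) := by
      rw [tendsto_iff_dist_tendsto_zero, Metric.tendsto_atTop]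
      intro ε hε
      obtain ⟨N, hN⟩ := Metric.tendsto_atTop.mp hlim0 (min ε 1) (lt_min hε one_pos)
      refine ⟨N, fun k hk => ?_⟩
      have h2 := hN k hk
      rw [hb, OptX.dist_some_some] at h2
      rw [Real.dist_eq, sub_zero, abs_of_nonneg (le_min zero_le_one dist_nonneg)] at h2
      rw [Real.dist_eq, sub_zero, abs_of_nonneg dist_nonneg]
      exact OptX.lt_of_min1_lt h2
    exact ⟨b, tendsto_nhds_of_cauchySeq_of_subseq hy hms_mono.tendsto_atTop hyb⟩
end
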